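/- arXiv:2302.12470 — 3 statements merged into one kernel-verified Lean document; each statement's English description precedes it below -/
import Mathlib

section
/- For all positive real numbers x, y, C, one has C·log(1+x) ≤ x²·y + y/3 + (C/2)·log(1 + C/y). -/
theorem stmt_0 (x y C : ℝ) (hx : 0 < x) (hy : 0 < y) (hC : 0 < C) :
    C * Real.log (1 + x) ≤ x ^ 2 * y + y / 3 + (C / 2) * Real.log (1 + C / y) := by
  have hx1 : (0:ℝ) < 1 + x := by linarith
  have hx2 : (0:ℝ) < 1 + x ^ 2 := by positivity
  have hyC : (0:ℝ) < y + C := by linarith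
  have hlogq : Real.log (1 + C / y) = Real.log (y + C) - Real.log y := by
    rw [show (1 : ℝ) + C / y = (y + C) / y by field_simp, Real.log_div (by positivity) hy.ne']
  have hlog1 : 2 * Real.log (1 + x) ≤ Real.log 2 + Real.log (1 + x ^ 2) := by
    have h : (1 + x) ^ 2 ≤ 2 * (1 + x ^ 2) := by nlinarith [sq_nonneg (1 - x)]
    have h2 := Real.log_le_log (by positivity) h
    rw [Real.log_pow, Real.log_mul (by norm_num) hx2.ne'] at h2
    push_cast at h2
    linarith
  rcases le_or_gt C (2 * y) with hcase | hcase
  · -- C ≤ 2y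
    have h2 : Real.log (1 + x ^ 2) ≤ x ^ 2 := by
      have := Real.log_le_sub_one_of_pos hx2; linarith
    have h3 : Real.log (2 * y / (y + C)) ≤ 2 * y / (y + C) - 1 :=
      Real.log_le_sub_one_of_pos (by positivity)
    have h4 : Real.log (2 * y / (y + C)) = Real.log 2 + Real.log y - Real.log (y + C) := by
      rw [Real.log_div (by positivity) hyC.ne', Real.log_mul (by norm_num) hy.ne']
    have h5 : 2 * y / (y + C) - 1 = (y - C) / (y + C) := by field_simp; ring
    have h6 : (C / 2) * ((y - C) / (y + C)) ≤ y / 3 := by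
      have he : (C / 2) * ((y - C) / (y + C)) = (C * (y - C)) / (2 * (y + C)) := by
        field_simp
      rw [he, div_le_iff₀ (by positivity)]
      nlinarith [sq_nonneg (y - C), sq_nonneg C, mul_pos hy hC]
    have h7 : (C / 2) * Real.log (2 * y / (y + C)) ≤ y / 3 := by
      calc (C / 2) * Real.log (2 * y / (y + C)) ≤ (C / 2) * ((y - C) / (y + C)) := by
            apply mul_le_mul_of_nonneg_left _ (by positivity)
            rw [← h5]; exact h3
        _ ≤ y / 3 := h6
    rw [h4] at h7
    rw [hlogq]
    nlinarith [mul_le_mul_of_nonneg_left hlog1 (le_of_lt (by positivity : (0:ℝ) < C / 2)),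
      mul_le_mul_of_nonneg_left h2 (le_of_lt (by positivity : (0:ℝ) < C / 2))]
  · -- C > 2y
    have harg : (0:ℝ) < 2 * y / C * (1 + x ^ 2) := by positivity
    have h2 : Real.log (2 * y / C * (1 + x ^ 2)) ≤ 2 * y / C * (1 + x ^ 2) - 1 :=
      Real.log_le_sub_one_of_pos harg
    have h3 : Real.log (2 * y / C * (1 + x ^ 2)) =
        Real.log 2 + Real.log y - Real.log C + Real.log (1 + x ^ 2) := by
      rw [Real.log_mul (by positivity) hx2.ne', Real.log_div (by positivity) hC.ne',
        Real.log_mul (by norm_num) hy.ne']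
    have h4 : Real.log C ≤ Real.log (y + C) := Real.log_le_log hC (by linarith)
    have h5 : 2 * y / C * (1 + x ^ 2) * (C / 2) = y * (1 + x ^ 2) := by
      field_simp
    rw [hlogq]
    rw [h3] at h2
    -- multiply h2 by C/2 > 0
    have h6 := mul_le_mul_of_nonneg_left h2 (le_of_lt (by positivity : (0:ℝ) < C / 2))
    have h7 := mul_le_mul_of_nonneg_left hlog1 (le_of_lt (by positivity : (0:ℝ) < C / 2))
    have h8 := mul_le_mul_of_nonneg_left h4 (le_of_lt (by positivity : (0:ℝ) < C / 2))
    nlinarith [h6, h7, h8]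
end

section
/- For all real numbers x, k with x > 0 and k > 0, k·log(1+x) ≤ x² + 1/3 + (k/2)·log(1+k). -/
theorem stmt_3 (x k : ℝ) (hx : 0 < x) (hk : 0 < k) :
    k * Real.log (1 + x) ≤ x ^ 2 + 1 / 3 + (k / 2) * Real.log (1 + k) := by
  have hx1 : (0:ℝ) < 1 + x := by linarith
  have hk1 : (0:ℝ) < 1 + k := by linarith
  have hlog : Real.log ((1 + x) ^ 2 / (1 + k)) ≤ (1 + x) ^ 2 / (1 + k) - 1 :=
    Real.log_le_sub_one_of_pos (by positivity)
  have heq : Real.log ((1 + x) ^ 2 / (1 + k)) =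
      2 * Real.log (1 + x) - Real.log (1 + k) := by
    rw [Real.log_div (by positivity) (by positivity), Real.log_pow]; ring
  rw [heq] at hlog
  have key : (k / 2) * ((1 + x) ^ 2 / (1 + k) - 1) ≤ x ^ 2 + 1 / 3 := by
    rw [div_sub_one hk1.ne', mul_div_assoc', div_le_iff₀ hk1]
    nlinarith [sq_nonneg (x - 1), sq_nonneg (k - 1/3), sq_nonneg (x*k), mul_pos hx hk]
  nlinarith [mul_le_mul_of_nonneg_left hlog (by linarith : (0:ℝ) ≤ k / 2)]
end

section
/- Let γ > 0, n ≥ 1, and let η ≥ 0, a ≥ 0 be real numbers. Then for every Z ≥ 0, η·log(Z+1) ≤ (γ/(2n))·exp(−γa)·Z² + γ/(6n) + (η/2)·log(1 + (2n·η/γ + 1)·exp(γa)). -/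
lemma core_ineq (C y x : ℝ) (hC : 0 ≤ C) (hy : 0 < y) (hx : 0 ≤ x) :
    C * Real.log (x + 1) ≤ y * x ^ 2 + y / 3 + (C / 2) * Real.log (1 + C / y) := by
  set m : ℝ := 1 + C / y with hm_def
  have hm1 : 1 ≤ m := by
    have h0 : 0 ≤ C / y := div_nonneg hC hy.le
    rw [hm_def]
    linarith
  have hm0 : 0 < m := by linarith
  have hmy : m * y = y + C := by
    rw [hm_def]
    field_simp
  have hx1 : (0:ℝ) < x + 1 := by linarith
  have hsq : (x + 1) ^ 2 ≤ 2 + 2 * x ^ 2 := by nlinarith [sq_nonneg (x - 1)]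
  have h2x : (0:ℝ) < 2 + 2 * x ^ 2 := by nlinarith
  have h1 : 2 * Real.log (x + 1) ≤ Real.log (2 + 2 * x ^ 2) := by
    have := Real.log_le_log (by positivity) hsq
    rwa [show (x+1)^2 = (x+1)*(x+1) by ring, Real.log_mul (ne_of_gt hx1) (ne_of_gt hx1),
      ← two_mul] at this
  have h2 : Real.log (2 + 2 * x ^ 2) ≤ (2 + 2 * x ^ 2) / m + Real.log m - 1 := by
    have h := Real.log_le_sub_one_of_pos (show (0:ℝ) < (2 + 2 * x ^ 2) / m by positivity)
    rw [Real.log_div (ne_of_gt h2x) (ne_of_gt hm0)] at h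
    linarith
  have key : C * Real.log (x + 1) ≤ (C / 2) * ((2 + 2 * x ^ 2) / m + Real.log m - 1) := by
    have : Real.log (x + 1) ≤ (1/2) * ((2 + 2 * x ^ 2) / m + Real.log m - 1) := by linarith
    calc C * Real.log (x + 1) ≤ C * ((1/2) * ((2 + 2 * x ^ 2) / m + Real.log m - 1)) :=
          mul_le_mul_of_nonneg_left this hC
      _ = (C / 2) * ((2 + 2 * x ^ 2) / m + Real.log m - 1) := by ring
  have hrest : (C / 2) * ((2 + 2 * x ^ 2) / m - 1) ≤ y * x ^ 2 + y / 3 := by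
    have h3 : (C / 2) * ((2 + 2 * x ^ 2) / m - 1) * m = C * (1 + x^2) - (C/2) * m := by
      field_simp
    have h4 : C * (1 + x^2) * y - C/2 * (y + C) ≤ (y * x^2 + y/3) * (y + C) := by
      nlinarith [sq_nonneg (y - C), mul_nonneg (mul_nonneg hy.le hy.le) (sq_nonneg x),
        mul_nonneg (mul_nonneg hC hy.le) (sq_nonneg x)]
    have e1 : (C * (1 + x^2) - C/2 * m) * y = C * (1 + x^2) * y - C/2 * (y + C) := by
      linear_combination (-(C/2)) * hmy
    have e2 : ((y * x^2 + y/3) * m) * y = (y * x^2 + y/3) * (y + C) := by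
      linear_combination (y * x^2 + y/3) * hmy
    have h5 : (C * (1 + x^2) - C/2 * m) * y ≤ ((y * x^2 + y/3) * m) * y := by
      rw [e1, e2]; exact h4
    have h6 : C * (1 + x^2) - C/2 * m ≤ (y * x^2 + y/3) * m :=
      le_of_mul_le_mul_right h5 hy
    have h7 : (C / 2) * ((2 + 2 * x ^ 2) / m - 1) * m ≤ (y * x ^ 2 + y / 3) * m := by
      rw [h3]; exact h6
    exact le_of_mul_le_mul_right h7 hm0
  have := key
  nlinarith [hrest]

theorem stmt_14 (γ : ℝ) (hγ : 0 < γ) (n : ℝ) (hn : 1 ≤ n) (η a : ℝ)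
    (hη : 0 ≤ η) (ha : 0 ≤ a) :
    ∀ Z : ℝ, 0 ≤ Z →
      η * Real.log (Z + 1) ≤ (γ / (2 * n)) * Real.exp (-γ * a) * Z ^ 2 +
        γ / (6 * n) +
        (η / 2) * Real.log (1 + (2 * n * η / γ + 1) * Real.exp (γ * a)) := by
  intro Z hZ
  have hn0 : (0:ℝ) < n := by linarith
  set y : ℝ := (γ / (2 * n)) * Real.exp (-γ * a) with hy_def
  have hy : 0 < y := by positivity
  have hcore := core_ineq η y Z hη hy hZ
  have hquot : η / y = 2 * n * η / γ * Real.exp (γ * a) := by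
    have he : Real.exp (-γ * a) = (Real.exp (γ * a))⁻¹ := by
      rw [← Real.exp_neg]; ring_nf
    rw [hy_def, he]
    field_simp
  have hy3 : y / 3 ≤ γ / (6 * n) := by
    have he1 : Real.exp (-γ * a) ≤ 1 := by
      apply Real.exp_le_one_iff.mpr; nlinarith
    have : y ≤ γ / (2 * n) := by
      calc y ≤ (γ / (2 * n)) * 1 := by
            apply mul_le_mul_of_nonneg_left he1 (by positivity)
        _ = γ / (2 * n) := by ring
    linarith [this, show γ / (2*n) / 3 = γ / (6*n) by ring]
  have hlog : Real.log (1 + η / y) ≤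
      Real.log (1 + (2 * n * η / γ + 1) * Real.exp (γ * a)) := by
    apply Real.log_le_log (by positivity)
    rw [hquot]
    have : (0:ℝ) < Real.exp (γ * a) := Real.exp_pos _
    nlinarith [mul_nonneg (div_nonneg (mul_nonneg (mul_nonneg (by norm_num : (0:ℝ) ≤ 2) hn0.le) hη) hγ.le) this.le]
  have hη2 : (η / 2) * Real.log (1 + η / y) ≤
      (η / 2) * Real.log (1 + (2 * n * η / γ + 1) * Real.exp (γ * a)) :=
    mul_le_mul_of_nonneg_left hlog (by positivity)
  linarith
end
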